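/- arXiv:1005.4512 — 3 statements merged into one kernel-verified Lean document; each statement's English description precedes it below -/
import Mathlib

section
/- Let g be a finite-dimensional Lie algebra over a field k of characteristic zero and let M be a g-module. Then M is locally finite if and only if for every m ∈ M the g-submodule of M generated by m is finite-dimensional. -/
/-!
Fix a spanning family `x₀, …, xₙ₋₁` of `g` and let `Eᵢ` be the action of `xᵢ`. Since commutators
of the `Eᵢ` lie in their span, every product `E_j E_{a₁} ⋯ E_{aᵣ} m` straightens into a combination
of ordered products `E_{b₁} ⋯ E_{bₛ} m` with `b₁ ≤ ⋯ ≤ bₛ` (the spanning half of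
Poincaré–Birkhoff–Witt), so the span of the ordered products is a `g`-submodule containing `m`.
It is finite-dimensional by downward induction on the smallest letter allowed: the ordered
products with letters `≥ i` lie in every `Eᵢ`-stable subspace containing those with letters
`≥ i + 1`, and local finiteness of `Eᵢ` makes such a subspace finite-dimensional.
Conversely, a vector of a finite-dimensional `x`-stable subspace is killed by the minimal
polynomial of `x` on that subspace.
-/

open Polynomial Submodule

namespace Module.End
variable {k M : Type*} [Field k] [AddCommGroup M] [Module k M]

def IsLocallyFinite (φ : Module.End k M) : Prop :=
  ∀ v : M, ∃ f : k[X], f ≠ 0 ∧ aeval φ f v = 0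

theorem isLocallyFinite_iff_forall_exists_invtSubmodule {φ : Module.End k M} :
    φ.IsLocallyFinite ↔ ∀ v : M, ∃ W ∈ φ.invtSubmodule, FiniteDimensional k W ∧ v ∈ W := by
  refine forall_congr' fun v => ⟨fun ⟨f, hf, hfv⟩ => ?_, fun ⟨W, hW, _, hv⟩ => ?_⟩
  · let ψ : k[X] →ₗ[k] M := (LinearMap.applyₗ v).comp (aeval φ).toLinearMap
    have hψ : ∀ p, ψ p = aeval φ p v := fun _ => rfl
    have hrange : LinearMap.range ψ ≤ (degreeLT k f.natDegree).map ψ := by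
      rintro _ ⟨p, rfl⟩
      refine ⟨p % f, mem_degreeLT.2 ((degree_mod_lt p hf).trans_le degree_le_natDegree), ?_⟩
      conv_rhs => rw [← EuclideanDomain.mod_add_div p f]
      simp [hψ, mul_comm f, hfv]
    refine ⟨LinearMap.range ψ, fun _ ⟨p, hp⟩ => ⟨X * p, by simp [hψ, ← hp]⟩,
      finiteDimensional_of_le hrange, 1, by simp [hψ]⟩
  · let ψ := φ.restrict hW
    have haeval : ∀ p : k[X], (aeval ψ p ⟨v, hv⟩ : M) = aeval φ p v := by
      intro p
      induction p using Polynomial.induction_on' with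
      | add p q hp hq => simp [hp, hq]
      | monomial n c => simp [ψ, pow_restrict n hW, LinearMap.restrict_apply]
    exact ⟨minpoly k ψ, minpoly.ne_zero (Algebra.IsIntegral.isIntegral ψ), by
      rw [← haeval, minpoly.aeval]; rfl⟩

theorem IsLocallyFinite.exists_invtSubmodule_le {φ : Module.End k M} (hφ : φ.IsLocallyFinite)
    {V : Submodule k M} (hV : V.FG) :
    ∃ W ∈ φ.invtSubmodule, FiniteDimensional k W ∧ V ≤ W := by
  induction V, hV using Submodule.fg_induction with
  | singleton v =>
    obtain ⟨W, hW, hWfin, hv⟩ := isLocallyFinite_iff_forall_exists_invtSubmodule.1 hφ v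
    exact ⟨W, hW, hWfin, (span_singleton_le_iff_mem v W).2 hv⟩
  | sup V₁ V₂ _ _ ih₁ ih₂ =>
    obtain ⟨W₁, hW₁, _, hV₁⟩ := ih₁
    obtain ⟨W₂, hW₂, _, hV₂⟩ := ih₂
    exact ⟨W₁ ⊔ W₂, invtSubmodule.sup_mem hW₁ hW₂, inferInstance, sup_le_sup hV₁ hV₂⟩

end Module.End

section OrderedSpan

variable {k M : Type*} [Field k] [AddCommGroup M] [Module k M]

theorem apply_mem_of_mem_span_range {ι : Type*} {E : ι → Module.End k M} {φ : Module.End k M}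
    (hφ : φ ∈ span k (Set.range E)) {x : M} {S : Submodule k M} (hx : ∀ i, E i x ∈ S) :
    φ x ∈ S :=
  (span_le (p := S.comap (LinearMap.applyₗ x))).2 (Set.range_subset_iff.2 hx) hφ

variable {n : ℕ} (E : Fin n → Module.End k M) (m : M)

/-- The span of the vectors `E a₁ (E a₂ ⋯ (E aᵣ m))` with `i ≤ a₁ ≤ ⋯ ≤ aᵣ` and `r ≤ d`. -/
def orderedSpan (i d : ℕ) : Submodule k M :=
  span k {v | ∃ w : List (Fin n), w.Pairwise (· ≤ ·) ∧ (∀ a ∈ w, i ≤ (a : ℕ)) ∧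
    w.length ≤ d ∧ (w.map E).prod m = v}

variable {E m}

theorem prod_apply_mem_orderedSpan {i d : ℕ} {w : List (Fin n)} (hw : w.Pairwise (· ≤ ·))
    (hwi : ∀ a ∈ w, i ≤ (a : ℕ)) (hwd : w.length ≤ d) : (w.map E).prod m ∈ orderedSpan E m i d :=
  subset_span ⟨w, hw, hwi, hwd, rfl⟩

theorem orderedSpan_mono {i i' d d' : ℕ} (hi : i' ≤ i) (hd : d ≤ d') :
    orderedSpan E m i d ≤ orderedSpan E m i' d' :=
  span_mono fun _ ⟨w, hw, hwi, hwd, hv⟩ =>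
    ⟨w, hw, fun a ha => hi.trans (hwi a ha), hwd.trans hd, hv⟩

theorem self_mem_orderedSpan (i d : ℕ) : m ∈ orderedSpan E m i d :=
  prod_apply_mem_orderedSpan (w := []) .nil (by simp) (by simp)

theorem orderedSpan_le_span_singleton {i : ℕ} (hi : n ≤ i) (d : ℕ) :
    orderedSpan E m i d ≤ span k {m} := by
  refine span_le.2 ?_
  rintro _ ⟨_ | ⟨a, t⟩, -, hwi, -, rfl⟩
  · simp
  · exact absurd (hwi a List.mem_cons_self) (by omega)

theorem apply_prod_apply_mem_orderedSpan {d : ℕ} {j : Fin n} {w : List (Fin n)}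
    (hw : w.Pairwise (· ≤ ·)) (hwd : w.length ≤ d) (hjw : ∀ a ∈ w, j ≤ a) :
    E j ((w.map E).prod m) ∈ orderedSpan E m j (d + 1) := by
  simpa using prod_apply_mem_orderedSpan (w := j :: w) (List.pairwise_cons.2 ⟨hjw, hw⟩)
    (List.forall_mem_cons.2 ⟨le_rfl, hjw⟩) (by simpa using hwd)

theorem map_orderedSpan_le_self (a : Fin n) (d : ℕ) :
    (orderedSpan E m a d).map (E a) ≤ orderedSpan E m a (d + 1) := by
  refine (map_span_le _ _ _).2 ?_
  rintro _ ⟨w, hw, hwa, hwd, rfl⟩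
  exact apply_prod_apply_mem_orderedSpan hw hwd hwa

/-- Straightening: ordered words of full length keep the lower bound `min i j`, while the
commutator terms are shorter and land in `orderedSpan E m 0 d`. -/
theorem map_orderedSpan_le (hE : ∀ i j, ⁅E i, E j⁆ ∈ span k (Set.range E)) (i d : ℕ)
    (j : Fin n) :
    (orderedSpan E m i d).map (E j) ≤ orderedSpan E m (min i j) (d + 1) ⊔ orderedSpan E m 0 d := by
  induction d using Nat.strong_induction_on generalizing i j with
  | _ d ih =>
  refine (map_span_le _ _ _).2 ?_
  rintro _ ⟨w, hw, hwi, hwd, rfl⟩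
  by_cases hjw : ∀ a ∈ w, j ≤ a
  · exact mem_sup_left (orderedSpan_mono (min_le_right _ _) le_rfl
      (apply_prod_apply_mem_orderedSpan hw hwd hjw))
  obtain _ | ⟨a, t⟩ := w
  · simp at hjw
  obtain ⟨hat, ht⟩ := List.pairwise_cons.1 hw
  have haj : a < j := lt_of_not_ge fun hja =>
    hjw (List.forall_mem_cons.2 ⟨hja, fun b hb => hja.trans (hat b hb)⟩)
  obtain ⟨d, rfl⟩ : ∃ d', d = d' + 1 := ⟨d - 1, by simp at hwd; omega⟩
  set x := (t.map E).prod m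
  have hx : x ∈ orderedSpan E m a d :=
    prod_apply_mem_orderedSpan ht (fun b hb => hat b hb) (by simpa using hwd)
  have hswap : E j (E a x) = E a (E j x) + ⁅E j, E a⁆ x := by
    rw [Ring.lie_def]
    simp
  have hmain : E a (E j x) ∈ orderedSpan E m i (d + 2) ⊔ orderedSpan E m 0 (d + 1) := by
    have hjx := ih d d.lt_succ_self a j (mem_map_of_mem hx)
    rw [min_eq_left (show (a : ℕ) ≤ j from haj.le)] at hjx
    have hle : (orderedSpan E m a (d + 1) ⊔ orderedSpan E m 0 d).map (E a) ≤
        orderedSpan E m i (d + 2) ⊔ orderedSpan E m 0 (d + 1) := by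
      rw [Submodule.map_sup]
      exact sup_le_sup ((map_orderedSpan_le_self a (d + 1)).trans
          (orderedSpan_mono (hwi a List.mem_cons_self) le_rfl))
        ((ih d d.lt_succ_self 0 a).trans
          (sup_le (orderedSpan_mono (Nat.zero_le _) le_rfl) (orderedSpan_mono le_rfl d.le_succ)))
    exact hle (mem_map_of_mem hjx)
  have hbracket : ⁅E j, E a⁆ x ∈ orderedSpan E m 0 (d + 1) :=
    apply_mem_of_mem_span_range (hE j a) fun b => by
      have hle : orderedSpan E m (min a b) (d + 1) ⊔ orderedSpan E m 0 d ≤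
          orderedSpan E m 0 (d + 1) :=
        sup_le (orderedSpan_mono (Nat.zero_le _) le_rfl) (orderedSpan_mono le_rfl d.le_succ)
      exact hle (ih d d.lt_succ_self a b (mem_map_of_mem hx))
  have hle : orderedSpan E m i (d + 2) ⊔ orderedSpan E m 0 (d + 1) ≤
      orderedSpan E m (min i j) (d + 1 + 1) ⊔ orderedSpan E m 0 (d + 1) :=
    sup_le_sup_right (orderedSpan_mono (min_le_left _ _) le_rfl) _
  simp only [List.map_cons, List.prod_cons, Module.End.mul_apply]
  rw [hswap]
  exact add_mem (hle hmain) (mem_sup_right hbracket)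

theorem orderedSpan_le_of_mem_invtSubmodule (c : Fin n) {W : Submodule k M}
    (hW : W ∈ (E c).invtSubmodule) (hle : ∀ d, orderedSpan E m (c + 1) d ≤ W) (d : ℕ) :
    orderedSpan E m c d ≤ W := by
  suffices h : ∀ w : List (Fin n), w.Pairwise (· ≤ ·) → (∀ a ∈ w, c ≤ a) → (w.map E).prod m ∈ W by
    exact span_le.2 fun _ ⟨w, hw, hwc, _, hv⟩ => hv ▸ h w hw hwc
  intro w
  induction w with
  | nil => exact fun _ _ => hle 0 (self_mem_orderedSpan _ _)
  | cons a t ih =>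
    intro hw hwc
    obtain ⟨hat, ht⟩ := List.pairwise_cons.1 hw
    by_cases hac : a = c
    · subst hac
      simpa using hW (ih ht hat)
    · have hca : c < a := lt_of_le_of_ne (hwc a List.mem_cons_self) (Ne.symm hac)
      exact hle _ (prod_apply_mem_orderedSpan hw
        (fun b hb => Nat.succ_le_of_lt (hca.trans_le ((List.mem_cons.1 hb).elim (·.ge) (hat b))))
        le_rfl)

theorem exists_finiteDimensional_orderedSpan_le (hloc : ∀ c, (E c).IsLocallyFinite) (i : ℕ) :
    ∃ W : Submodule k M, FiniteDimensional k W ∧ ∀ d, orderedSpan E m i d ≤ W := by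
  by_cases hi : i < n
  · obtain ⟨W', hW'fin, hW'⟩ := exists_finiteDimensional_orderedSpan_le hloc (i + 1)
    obtain ⟨W, hWinv, hWfin, hW'W⟩ :=
      (hloc ⟨i, hi⟩).exists_invtSubmodule_le ((fg_iff_finiteDimensional W').2 hW'fin)
    exact ⟨W, hWfin,
      orderedSpan_le_of_mem_invtSubmodule ⟨i, hi⟩ hWinv fun d => (hW' d).trans hW'W⟩
  · exact ⟨span k {m}, inferInstance, orderedSpan_le_span_singleton (not_lt.1 hi)⟩
termination_by n - i

theorem exists_finiteDimensional_invtSubmodule (hE : ∀ i j, ⁅E i, E j⁆ ∈ span k (Set.range E))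
    (hloc : ∀ c, (E c).IsLocallyFinite) (m : M) :
    ∃ W : Submodule k M, FiniteDimensional k W ∧ m ∈ W ∧ ∀ j, W ∈ (E j).invtSubmodule := by
  obtain ⟨W, hWfin, hW⟩ := exists_finiteDimensional_orderedSpan_le (m := m) hloc 0
  refine ⟨⨆ d, orderedSpan E m 0 d, finiteDimensional_of_le (iSup_le hW),
    mem_iSup_of_mem 0 (self_mem_orderedSpan 0 0), fun j => ?_⟩
  rw [Module.End.mem_invtSubmodule_iff_map_le, Submodule.map_iSup]
  refine iSup_le fun d => (map_orderedSpan_le hE 0 d j).trans (sup_le ?_ (le_iSup _ d))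
  rw [Nat.zero_min]
  exact le_iSup (fun d => orderedSpan E m 0 d) (d + 1)

end OrderedSpan

theorem locally_finite_iff_cyclic_submodules_finite_dimensional_general
    (k : Type*) [Field k]
    (g : Type*) [LieRing g] [LieAlgebra k g] [Module.Finite k g]
    (M : Type*) [AddCommGroup M] [Module k M] [LieRingModule g M] [LieModule k g M] :
    (∀ (x : g) (m : M), ∃ f : Polynomial k, f ≠ 0 ∧
        (Polynomial.aeval (LieModule.toEnd k g M x) f) m = 0) ↔
      (∀ m : M, FiniteDimensional k (LieSubmodule.lieSpan k g ({m} : Set M))) := by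
  refine ⟨fun h m => ?_, fun h x => ?_⟩
  · obtain ⟨n, xs, hxs⟩ := Module.Finite.exists_fin (R := k) (M := g)
    let E := LieModule.toEnd k g M ∘ xs
    have hspan : ∀ y : g, LieModule.toEnd k g M y ∈ span k (Set.range E) := by
      intro y
      have := mem_map_of_mem (f := (LieModule.toEnd k g M : g →ₗ[k] Module.End k M))
        (hxs ▸ mem_top : y ∈ span k (Set.range xs))
      rwa [← span_image, ← Set.range_comp] at this
    have hlie : ∀ x y : g, LieModule.toEnd k g M ⁅x, y⁆ =
        ⁅LieModule.toEnd k g M x, LieModule.toEnd k g M y⁆ := fun x y => by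
      ext v
      simp [Ring.lie_def]
    obtain ⟨W, hWfin, hmW, hWinv⟩ := exists_finiteDimensional_invtSubmodule (E := E)
      (fun i j => hlie (xs i) (xs j) ▸ hspan _) (fun i => h (xs i)) m
    let N : LieSubmodule k g M :=
      { W with lie_mem := fun {y v} hv => apply_mem_of_mem_span_range (hspan y) (hWinv · hv) }
    exact finiteDimensional_of_le (LieSubmodule.lieSpan_le.2 (Set.singleton_subset_iff.2 hmW) :
      _ ≤ N)
  · refine Module.End.isLocallyFinite_iff_forall_exists_invtSubmodule.2 fun m => ?_
    exact ⟨LieSubmodule.lieSpan k g {m}, fun _ hv => LieSubmodule.lie_mem _ hv, h m,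
      LieSubmodule.subset_lieSpan rfl⟩

/-- A `g`-module `M` over a finite-dimensional Lie algebra `g` (over a field `k` of
characteristic zero) is locally finite (every `x ∈ g` acts on every `m ∈ M` satisfying a
nonzero polynomial) if and only if every cyclic `g`-submodule of `M` is finite-dimensional. -/
theorem locally_finite_iff_cyclic_submodules_finite_dimensional
    (k : Type*) [Field k] [CharZero k]
    (g : Type*) [LieRing g] [LieAlgebra k g] [Module.Finite k g]
    (M : Type*) [AddCommGroup M] [Module k M] [LieRingModule g M] [LieModule k g M] :
    (∀ (x : g) (m : M), ∃ f : Polynomial k, f ≠ 0 ∧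
        (Polynomial.aeval (LieModule.toEnd k g M x) f) m = 0) ↔
      (∀ m : M, FiniteDimensional k (LieSubmodule.lieSpan k g ({m} : Set M))) :=
  locally_finite_iff_cyclic_submodules_finite_dimensional_general k g M
end

section
/- Let L be an additive abelian group and let α, α′ : L × L → ℂˣ be normalized 2-cocycles whose commutator functions coincide: α(x,y)·α(y,x)⁻¹ = α′(x,y)·α′(y,x)⁻¹ for all x, y ∈ L. Then α and α′ are cohomologous: there exists a function β : L → ℂˣ with β(0) = 1 such that α′(x,y) = α(x,y)·β(x+y)·β(x)⁻¹·β(y)⁻¹ for all x, y ∈ L. -/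
/-!
The quotient `γ = α' / α` is again a normalized 2-cocycle, and equality of the commutator
functions says exactly that `γ` is symmetric. A symmetric normalized cocycle `γ` with values in an
abelian group `A` makes `A × L` with `(a, x) * (b, y) = (a * b * γ x y, x + y)` into an abelian
group containing `A` as the subgroup `A × 0`. Since `ℂˣ` is divisible, hence an injective
`ℤ`-module, this inclusion has a retraction `r`, and `β x = (r (1, x))⁻¹` satisfies
`γ x y = β (x + y) / (β x * β y)`.
-/

noncomputable instance Additive.divisibleByInt {A : Type*} [Group A] [RootableBy A ℤ] :
    DivisibleBy (Additive A) ℤ where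
  div a n := .ofMul (RootableBy.root a.toMul n)
  div_zero a := congrArg Additive.ofMul (RootableBy.root_zero _)
  div_cancel a hn := by
    rw [← ofMul_zpow, RootableBy.root_cancel _ hn]
    rfl

noncomputable instance IsAlgClosed.rootableByUnits {K : Type*} [Field K] [IsAlgClosed K] :
    RootableBy Kˣ ℤ :=
  letI : RootableBy Kˣ ℕ := rootableByOfPowLeftSurj _ _ fun {n} hn x => by
    obtain ⟨z, hz⟩ := IsAlgClosed.exists_pow_nat_eq (x : K) (Nat.pos_of_ne_zero hn)
    have hz0 : z ≠ 0 := by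
      rintro rfl
      exact x.ne_zero (by rw [← hz, zero_pow hn])
    exact ⟨Units.mk0 z hz0, Units.ext (by simpa using hz)⟩
  Group.rootableByIntOfRootableByNat _

theorem MonoidHom.exists_retraction_of_injective {A E : Type*} [CommGroup A] [RootableBy A ℤ]
    [CommGroup E] (i : A →* E) (hi : Function.Injective i) : ∃ r : E →* A, ∀ a, r (i a) = a := by
  obtain ⟨r, hr⟩ := (Module.Baer.of_divisible (Additive A)).extension_property_addMonoidHom
    (MonoidHom.toAdditive i) hi (AddMonoidHom.id _)
  exact ⟨MonoidHom.toAdditive.symm r, fun a => congrArg Additive.toMul (DFunLike.congr_fun hr a)⟩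

def IsTwoCocycle {L A : Type*} [Add L] [Mul A] (f : L → L → A) : Prop :=
  ∀ x y z, f x y * f (x + y) z = f y z * f x (y + z)

theorem IsTwoCocycle.div {L A : Type*} [Add L] [DivisionCommMonoid A] {f g : L → L → A}
    (hf : IsTwoCocycle f) (hg : IsTwoCocycle g) :
    IsTwoCocycle (g / f) := fun x y z => by
  simp only [Pi.div_apply]
  rw [div_mul_div_comm, div_mul_div_comm, hf, hg]

section CocycleExtension

variable {L A : Type*} [AddCommGroup L] [CommGroup A]

@[ext]
structure CocycleExt (f : L → L → A) where
  fst : A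
  snd : L

namespace CocycleExt

variable {f : L → L → A}

instance : One (CocycleExt f) := ⟨⟨1, 0⟩⟩

instance : Mul (CocycleExt f) := ⟨fun p q => ⟨p.fst * q.fst * f p.snd q.snd, p.snd + q.snd⟩⟩

instance : Inv (CocycleExt f) := ⟨fun p => ⟨(p.fst * f (-p.snd) p.snd)⁻¹, -p.snd⟩⟩

@[simp] theorem mk_mul_mk (a b : A) (x y : L) :
    (⟨a, x⟩ * ⟨b, y⟩ : CocycleExt f) = ⟨a * b * f x y, x + y⟩ := rfl

abbrev commGroup (hf : IsTwoCocycle f) (h0 : ∀ y, f 0 y = 1) (hs : ∀ x y, f x y = f y x) :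
    CommGroup (CocycleExt f) :=
  { Group.ofLeftAxioms
      (fun ⟨a, x⟩ ⟨b, y⟩ ⟨c, z⟩ => by
        ext
        · simp only [mk_mul_mk]
          rw [mul_right_comm _ c, mul_assoc _ (f x y), hf]
          ac_rfl
        · exact add_assoc x y z)
      (fun ⟨a, x⟩ => by
        ext
        · show 1 * a * f 0 x = a
          rw [h0, one_mul, mul_one]
        · exact zero_add x)
      (fun ⟨a, x⟩ => by
        ext
        · show (a * f (-x) x)⁻¹ * a * f (-x) x = 1
          rw [mul_assoc, inv_mul_cancel]
        · exact neg_add_cancel x) with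
    mul_comm := fun ⟨a, x⟩ ⟨b, y⟩ => by
      ext
      · exact congrArg₂ (· * ·) (mul_comm a b) (hs x y)
      · exact add_comm x y }

theorem mk_one_mul_mk_one (h0 : ∀ y, f 0 y = 1) (x y : L) :
    (⟨1, x⟩ * ⟨1, y⟩ : CocycleExt f) = ⟨f x y, 0⟩ * ⟨1, x + y⟩ := by
  simp [h0]

end CocycleExt

theorem IsTwoCocycle.exists_eq_div_of_symm [RootableBy A ℤ] {f : L → L → A}
    (hf : IsTwoCocycle f) (h0 : ∀ y, f 0 y = 1) (hs : ∀ x y, f x y = f y x) :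
    ∃ β : L → A, β 0 = 1 ∧ ∀ x y, f x y = β (x + y) / (β x * β y) := by
  let := CocycleExt.commGroup hf h0 hs
  let i : A →* CocycleExt f :=
    { toFun a := ⟨a, 0⟩
      map_one' := rfl
      map_mul' a b := by ext <;> simp [h0] }
  obtain ⟨r, hr⟩ := i.exists_retraction_of_injective fun a b hab => congrArg CocycleExt.fst hab
  refine ⟨fun x => (r ⟨1, x⟩)⁻¹, inv_eq_one.mpr r.map_one, fun x y => ?_⟩
  have key := congrArg r (CocycleExt.mk_one_mul_mk_one h0 x y)
  rw [map_mul, map_mul, show (⟨f x y, 0⟩ : CocycleExt f) = i (f x y) from rfl, hr] at key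
  rw [← mul_inv, div_inv_eq_mul, inv_mul_eq_div, key, mul_div_cancel_right]

end CocycleExtension

theorem cocycles_with_equal_commutator_are_cohomologous_general
    (L : Type*) [AddCommGroup L]
    (α α' : L → L → ℂˣ)
    (hcoc : ∀ x y z : L, α x y * α (x + y) z = α y z * α x (y + z))
    (hn' : ∀ y : L, α 0 y = 1)
    (hcoc' : ∀ x y z : L, α' x y * α' (x + y) z = α' y z * α' x (y + z))
    (hm' : ∀ y : L, α' 0 y = 1)
    (hcomm : ∀ x y : L, α x y * (α y x)⁻¹ = α' x y * (α' y x)⁻¹) :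
    ∃ β : L → ℂˣ, β 0 = 1 ∧
      ∀ x y : L, α' x y = α x y * β (x + y) * (β x)⁻¹ * (β y)⁻¹ := by
  have hsymm (x y : L) : (α' / α) x y = (α' / α) y x :=
    div_eq_div_iff_div_eq_div.mpr (by simpa only [div_eq_mul_inv] using (hcomm x y).symm)
  obtain ⟨β, hβ0, hβ⟩ := (IsTwoCocycle.div hcoc hcoc').exists_eq_div_of_symm
    (fun y => by simp [hn', hm']) hsymm
  refine ⟨β, hβ0, fun x y => ?_⟩
  rw [mul_assoc, mul_assoc, ← mul_inv, ← div_eq_mul_inv, ← div_eq_iff_eq_mul']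
  exact hβ x y

/-- Two normalized 2-cocycles on an abelian group with values in `ℂˣ` whose commutator
functions coincide are cohomologous. -/
theorem cocycles_with_equal_commutator_are_cohomologous
    (L : Type*) [AddCommGroup L]
    (α α' : L → L → ℂˣ)
    (hcoc : ∀ x y z : L, α x y * α (x + y) z = α y z * α x (y + z))
    (hn : ∀ x : L, α x 0 = 1) (hn' : ∀ y : L, α 0 y = 1)
    (hcoc' : ∀ x y z : L, α' x y * α' (x + y) z = α' y z * α' x (y + z))
    (hm : ∀ x : L, α' x 0 = 1) (hm' : ∀ y : L, α' 0 y = 1)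
    (hcomm : ∀ x y : L, α x y * (α y x)⁻¹ = α' x y * (α' y x)⁻¹) :
    ∃ β : L → ℂˣ, β 0 = 1 ∧
      ∀ x y : L, α' x y = α x y * β (x + y) * (β x)⁻¹ * (β y)⁻¹ :=
  cocycles_with_equal_commutator_are_cohomologous_general L α α' hcoc hn' hcoc' hm' hcomm
end

section
/- Let V be a finite-dimensional complex vector space and T ∈ End(V). Then exp(2πi·T) = id_V if and only if T is diagonalizable and every eigenvalue of T is an integer. -/
/-!
An eigenvector `v` of `T` with eigenvalue `μ` satisfies `exp(2πiT) v = exp(2πiμ) v`. This gives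
integrality of the eigenvalues when `exp(2πiT) - 1` is nilpotent, and `exp(2πiT) = 1` when `T` is
diagonalizable with integer eigenvalues. Conversely, if `exp(2πiT) = 1`, write `T = N + S` with
`N` nilpotent, `S` semisimple and `[N, S] = 0` (Jordan–Chevalley). Then `exp(2πiS) = exp(-2πiN)` is
unipotent, so `S` has integer eigenvalues and `exp(2πiS) = 1`. Hence `exp(2πiN) = 1`, which forces
`N = 0` since `exp N - 1 = N u` with `u ∈ 1 + N·ℚ[N]` a unit.
-/

open Finset Matrix Module End Complex Real

namespace IsNilpotent

variable {A : Type*} [Ring A] [Module ℚ A]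

theorem exp_sub_one_eq_mul {a : A} {k : ℕ} (hk : a ^ (k + 1) = 0) :
    exp a - 1 = a * ∑ i ∈ range k, ((i + 1).factorial : ℚ)⁻¹ • a ^ i := by
  rw [exp_eq_sum hk, sum_range_succ', mul_sum]
  simp [pow_succ', mul_smul_comm]

theorem eq_zero_of_exp_eq_one {a : A} (ha : IsNilpotent a) (h : exp a = 1) : a = 0 := by
  obtain ⟨k, hk⟩ := ha
  have hu : IsUnit (∑ i ∈ range (k + 1), ((i + 1).factorial : ℚ)⁻¹ • a ^ i) := by
    rw [sum_range_succ']
    simp only [zero_add, Nat.factorial_one, Nat.cast_one, inv_one, pow_zero, one_smul]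
    refine isUnit_add_one (Commute.isNilpotent_sum (fun i _ => ?_) fun i j _ _ => ?_)
    · exact (IsNilpotent.pow_succ i ⟨k, hk⟩).smul _
    · exact ((Commute.pow_pow_self a _ _).smul_left _).smul_right _
  have hfac := exp_sub_one_eq_mul (pow_eq_zero_of_le (by omega : k ≤ k + 1 + 1) hk)
  rw [h, sub_self, eq_comm] at hfac
  exact hu.mul_left_eq_zero.mp hfac

end IsNilpotent

namespace NormedSpace

variable {A : Type*} [Ring A] [Algebra ℚ A] [TopologicalSpace A] [IsTopologicalRing A]

theorem exp_eq_isNilpotent_exp {a : A} (ha : IsNilpotent a) : exp a = IsNilpotent.exp a := by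
  obtain ⟨k, hk⟩ := ha
  rw [exp_eq_tsum ℚ, IsNilpotent.exp_eq_sum hk]
  exact tsum_eq_sum fun i hi => by rw [pow_eq_zero_of_le (by simpa using hi) hk, smul_zero]

theorem isNilpotent_exp_sub_one {a : A} (ha : IsNilpotent a) : IsNilpotent (exp a - 1) := by
  simpa only [exp_eq_isNilpotent_exp ha] using IsNilpotent.isNilpotent_exp_sub_one ha

theorem eq_zero_of_isNilpotent_of_exp_eq_one {a : A} (ha : IsNilpotent a) (h : exp a = 1) :
    a = 0 :=
  ha.eq_zero_of_exp_eq_one (exp_eq_isNilpotent_exp ha ▸ h)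

end NormedSpace

theorem Complex.exp_two_pi_I_mul_eq_one_iff {μ : ℂ} :
    Complex.exp (2 * π * I * μ) = 1 ↔ ∃ k : ℤ, μ = k := by
  rw [exp_eq_one_iff]
  refine exists_congr fun k => ⟨fun hk => ?_, fun hk => by rw [hk, mul_comm]⟩
  exact mul_left_cancel₀ two_pi_I_ne_zero (hk.trans (mul_comm _ _))

theorem Module.End.IsSemisimple.eq_one_of_eigenspace_le {K V : Type*} [Field K] [IsAlgClosed K]
    [AddCommGroup V] [Module K V] [FiniteDimensional K V] {f g : End K V} (hf : f.IsSemisimple)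
    (h : ∀ μ, f.HasEigenvalue μ → f.eigenspace μ ≤ g.eigenspace 1) : g = 1 := by
  have htop : g.eigenspace 1 = ⊤ := by
    refine eq_top_iff.mpr (hf.iSup_eigenspace_eq_top ▸ iSup_le fun μ => ?_)
    by_cases hμ : f.HasEigenvalue μ
    · exact h μ hμ
    · rw [hasEigenvalue_iff, not_not] at hμ
      simp [hμ]
  ext v
  simpa using mem_eigenspace_iff.mp (htop ▸ Submodule.mem_top : v ∈ g.eigenspace 1)

namespace Matrix

variable {m : Type*} [Fintype m] [DecidableEq m]

theorem exists_isNilpotent_isSemisimple {K : Type*} [Field K] [PerfectField K]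
    (T : Matrix m m K) :
    ∃ N S : Matrix m m K,
      IsNilpotent N ∧ IsSemisimple (mulVecLin S) ∧ Commute N S ∧ T = N + S := by
  obtain ⟨n, hn, s, hs, hn_nil, hs_ss, hsum⟩ :=
    Module.End.exists_isNilpotent_isSemisimple (f := toLinAlgEquiv' T)
  have hnT : Commute n (toLinAlgEquiv' T) :=
    (Algebra.commute_of_mem_adjoin_singleton_of_commute hn (Commute.refl _)).symm
  refine ⟨toLinAlgEquiv'.symm n, toLinAlgEquiv'.symm s, hn_nil.map _, ?_, ?_, ?_⟩
  · exact (toLinAlgEquiv'.apply_symm_apply s ▸ hs_ss :)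
  · exact (Algebra.commute_of_mem_adjoin_singleton_of_commute hs hnT).map _
  · exact toLinAlgEquiv'.injective (by simpa using hsum)

section
attribute [local instance] Matrix.linftyOpNormedRing Matrix.linftyOpNormedAlgebra

theorem exp_mulVec_of_mulVec_eq_smul {𝕂 : Type*} [RCLike 𝕂] {A : Matrix m m 𝕂}
    {v : m → 𝕂} {μ : 𝕂} (h : A *ᵥ v = μ • v) :
    NormedSpace.exp A *ᵥ v = NormedSpace.exp μ • v := by
  have hpow (k : ℕ) : A ^ k *ᵥ v = μ ^ k • v := by
    induction k with
    | zero => simp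
    | succ k ih => rw [pow_succ', ← mulVec_mulVec, ih, mulVec_smul, h, smul_smul, pow_succ]
  have hA := (NormedSpace.exp_series_hasSum_exp' (𝕂 := 𝕂) A).map (mulVec.addMonoidHomLeft v)
    (continuous_id.matrix_mulVec continuous_const)
  refine hA.unique ?_
  simpa [Function.comp_def, mulVec.addMonoidHomLeft, smul_mulVec, hpow, smul_smul]
    using (NormedSpace.exp_series_hasSum_exp' (𝕂 := 𝕂) μ).smul_const v

end

theorem exp_smul_mulVec_of_mem_eigenspace {T : Matrix m m ℂ} {c μ : ℂ} {v : m → ℂ}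
    (hv : v ∈ eigenspace (mulVecLin T) μ) :
    NormedSpace.exp (c • T) *ᵥ v = Complex.exp (c * μ) • v := by
  rw [Complex.exp_eq_exp_ℂ]
  apply exp_mulVec_of_mulVec_eq_smul
  rw [smul_mulVec, ← mulVecLin_apply, mem_eigenspace_iff.mp hv, smul_smul]

theorem exists_int_of_hasEigenvalue_of_isNilpotent_exp_sub_one {T : Matrix m m ℂ}
    (hT : IsNilpotent (NormedSpace.exp ((2 * π * I : ℂ) • T) - 1)) {μ : ℂ}
    (hμ : HasEigenvalue (mulVecLin T) μ) : ∃ k : ℤ, μ = k := by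
  obtain ⟨v, hv_mem, hv_ne⟩ := hμ.exists_hasEigenvector
  have hexp := exp_smul_mulVec_of_mem_eigenspace (c := 2 * π * I) hv_mem
  have hsub : HasEigenvalue (mulVecLin (NormedSpace.exp ((2 * π * I : ℂ) • T) - 1))
      (Complex.exp (2 * π * I * μ) - 1) :=
    hasEigenvalue_of_hasEigenvector ⟨mem_eigenspace_iff.mpr (by simp [hexp, sub_smul]), hv_ne⟩
  have := hsub.isNilpotent_of_isNilpotent (hT.map toLinAlgEquiv')
  rwa [isNilpotent_iff_eq_zero, sub_eq_zero, exp_two_pi_I_mul_eq_one_iff] at this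

theorem exp_two_pi_I_smul_eq_one_of_isSemisimple {T : Matrix m m ℂ}
    (hss : IsSemisimple (mulVecLin T))
    (hint : ∀ μ, HasEigenvalue (mulVecLin T) μ → ∃ k : ℤ, μ = k) :
    NormedSpace.exp ((2 * π * I : ℂ) • T) = 1 := by
  apply toLinAlgEquiv'.injective
  rw [map_one]
  refine hss.eq_one_of_eigenspace_le fun μ hμ v hv => ?_
  obtain ⟨k, rfl⟩ := hint μ hμ
  rw [mem_eigenspace_iff, one_smul, toLinAlgEquiv'_apply, exp_smul_mulVec_of_mem_eigenspace hv,
    exp_two_pi_I_mul_eq_one_iff.mpr ⟨k, rfl⟩, one_smul]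

theorem isSemisimple_of_exp_two_pi_I_smul_eq_one {T : Matrix m m ℂ}
    (h : NormedSpace.exp ((2 * π * I : ℂ) • T) = 1) : IsSemisimple (mulVecLin T) := by
  set c : ℂ := 2 * π * I
  obtain ⟨N, S, hN, hS, hNS, rfl⟩ := T.exists_isNilpotent_isSemisimple
  have hcNS : Commute (c • S) (c • N) := (hNS.symm.smul_left c).smul_right c
  have hprod : NormedSpace.exp (c • S) * NormedSpace.exp (c • N) = 1 := by
    rw [← exp_add_of_commute _ _ hcNS, ← smul_add, add_comm, h]
  have hS_nil : IsNilpotent (NormedSpace.exp (c • S) - 1) := by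
    have : NormedSpace.exp (c • S) - 1 =
        -(NormedSpace.exp (c • S) * (NormedSpace.exp (c • N) - 1)) := by
      rw [mul_sub, hprod, mul_one, neg_sub]
    rw [this]
    exact ((hcNS.exp.sub_right (Commute.one_right _)).isNilpotent_mul_left
      (NormedSpace.isNilpotent_exp_sub_one (hN.smul c))).neg
  have hS_one : NormedSpace.exp (c • S) = 1 :=
    exp_two_pi_I_smul_eq_one_of_isSemisimple hS
      fun μ => exists_int_of_hasEigenvalue_of_isNilpotent_exp_sub_one hS_nil
  rw [hS_one, one_mul] at hprod
  have hN_zero : N = 0 := by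
    simpa [c, two_pi_I_ne_zero] using
      NormedSpace.eq_zero_of_isNilpotent_of_exp_eq_one (hN.smul c) hprod
  rwa [hN_zero, zero_add]

end Matrix

/-- For a complex matrix `T` (an endomorphism of the finite-dimensional complex vector space
`Fin n → ℂ`), `exp(2πi·T) = 1` if and only if `T` is diagonalizable (i.e. semisimple as an
endomorphism) and every eigenvalue of `T` is an integer. -/
theorem exp_two_pi_I_eq_one_iff_semisimple_integer_eigenvalues
    (n : ℕ) (T : Matrix (Fin n) (Fin n) ℂ) :
    NormedSpace.exp (((2 : ℂ) * Real.pi * Complex.I) • T) = 1 ↔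
      Module.End.IsSemisimple (Matrix.mulVecLin T) ∧
        ∀ μ : ℂ, Module.End.HasEigenvalue (Matrix.mulVecLin T) μ → ∃ k : ℤ, μ = (k : ℂ) := by
  constructor
  · intro h
    exact ⟨isSemisimple_of_exp_two_pi_I_smul_eq_one h,
      fun μ => exists_int_of_hasEigenvalue_of_isNilpotent_exp_sub_one (by simp [h])⟩
  · rintro ⟨hss, hint⟩
    exact exp_two_pi_I_smul_eq_one_of_isSemisimple hss hint
end
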